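/- arXiv:math-ph/0008011 — 7 statements merged into one kernel-verified Lean document; each statement's English description precedes it below -/
import Mathlib

section
/- Let ε : ℝ → ℝ be continuously differentiable on [0,∞) with ε(t) > 0 for all t ≥ 0, ε monotonically decreasing with ε(t) → 0 as t → ∞, and |ε'(t)|/ε(t)^{5/2} → 0 as t → ∞. Then ∫₀^∞ ε(t) dt = ∞ (i.e., ∫₀^T ε(t) dt → ∞ as T → ∞). -/
/-!
For large `t` the rate condition gives `(3/2)|ε'| ≤ ε^{5/2}`, i.e. the derivative of
`ε^{-3/2}` is at most `1`. So `ε(t)^{-3/2} ≤ t + c`, hence `ε(t) ≥ (t + c)^{-2/3}`, whose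
integral diverges.
-/

open Filter Set MeasureTheory

section RpowComparison

variable {f f' : ℝ → ℝ} {a p : ℝ}

theorem monotoneOn_sub_rpow_neg (hp : 0 ≤ p)
    (hf : ∀ x ∈ Ici a, HasDerivWithinAt f (f' x) (Ici a) x) (hpos : ∀ x ∈ Ici a, 0 < f x)
    (hrate : ∀ x ∈ Ici a, p * |f' x| ≤ f x ^ (p + 1)) :
    MonotoneOn (fun t => t - f t ^ (-p)) (Ici a) := by
  have hcont : ContinuousOn f (Ici a) := fun x hx => (hf x hx).continuousWithinAt
  refine monotoneOn_of_hasDerivWithinAt_nonneg (convex_Ici a)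
    (f' := fun x => 1 - f' x * -p * f x ^ (-p - 1))
    (continuousOn_id.sub (hcont.rpow_const fun x hx => Or.inl (hpos x hx).ne')) ?_ ?_
  · intro x hx
    rw [interior_Ici] at hx ⊢
    have hx' : x ∈ Ici a := mem_Ici.2 hx.le
    exact (hasDerivWithinAt_id x _).sub
      (((hf x hx').mono Ioi_subset_Ici_self).rpow_const (Or.inl (hpos x hx').ne'))
  · intro x hx
    rw [interior_Ici] at hx
    have hx' : x ∈ Ici a := mem_Ici.2 hx.le
    have hfx := hpos x hx'
    have hpow : f x ^ (-p - 1) * f x ^ (p + 1) = 1 := by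
      rw [← Real.rpow_add hfx]; norm_num
    have hbound : f' x * -p * f x ^ (-p - 1) ≤ 1 :=
      calc f' x * -p * f x ^ (-p - 1) ≤ p * |f' x| * f x ^ (-p - 1) := by
            gcongr ?_ * _
            nlinarith [neg_le_abs (f' x)]
        _ ≤ f x ^ (p + 1) * f x ^ (-p - 1) := by
            gcongr
            exact hrate x hx'
        _ = 1 := by rw [mul_comm, hpow]
    linarith

theorem add_rpow_neg_inv_le (hp : 0 < p)
    (hf : ∀ x ∈ Ici a, HasDerivWithinAt f (f' x) (Ici a) x) (hpos : ∀ x ∈ Ici a, 0 < f x)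
    (hrate : ∀ x ∈ Ici a, p * |f' x| ≤ f x ^ (p + 1)) (t : ℝ) (ht : t ∈ Ici a) :
    (t + (f a ^ (-p) - a)) ^ (-p⁻¹) ≤ f t := by
  have hmono := monotoneOn_sub_rpow_neg hp.le hf hpos hrate self_mem_Ici ht ht
  have hft := hpos t ht
  calc (t + (f a ^ (-p) - a)) ^ (-p⁻¹) ≤ (f t ^ (-p)) ^ (-p⁻¹) :=
        Real.rpow_le_rpow_of_nonpos (by positivity) (by simp only at hmono; linarith)
          (by simpa using hp.le)
    _ = f t := by
        rw [← Real.rpow_mul hft.le, neg_mul_neg, mul_inv_cancel₀ hp.ne', Real.rpow_one]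

end RpowComparison

theorem tendsto_intervalIntegral_add_rpow_atTop {r : ℝ} (hr : -1 < r) (a c : ℝ) :
    Tendsto (fun T => ∫ t in a..T, (t + c) ^ r) atTop atTop := by
  simp only [intervalIntegral.integral_comp_add_right (· ^ r), integral_rpow (Or.inl hr)]
  refine Tendsto.atTop_div_const (by linarith) (tendsto_atTop_add_const_right _ _ ?_)
  exact (tendsto_rpow_atTop (by linarith)).comp (tendsto_atTop_add_const_right _ c tendsto_id)

theorem tendsto_intervalIntegral_atTop_of_le {f g : ℝ → ℝ} {a b : ℝ} (hab : a ≤ b)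
    (hf : ContinuousOn f (Ici a)) (hg : ∀ T, IntervalIntegrable g volume b T)
    (hgf : ∀ t ∈ Ici b, g t ≤ f t)
    (hdiv : Tendsto (fun T => ∫ t in b..T, g t) atTop atTop) :
    Tendsto (fun T => ∫ t in a..T, f t) atTop atTop := by
  have hfint : ∀ x y, a ≤ x → x ≤ y → IntervalIntegrable f volume x y := fun x y hx hxy =>
    (hf.mono fun t ht => hx.trans (uIcc_of_le hxy ▸ ht).1).intervalIntegrable
  refine tendsto_atTop_mono' _ ?_ (tendsto_atTop_add_const_left _ (∫ t in a..b, f t) hdiv)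
  filter_upwards [eventually_ge_atTop b] with T hT
  rw [← intervalIntegral.integral_add_adjacent_intervals (hfint a b le_rfl hab)
    (hfint b T hab hT)]
  gcongr
  exact intervalIntegral.integral_mono_on hT (hg T) (hfint b T hab hT) fun t ht => hgf t ht.1

theorem stmt3_general (ε ε' : ℝ → ℝ)
    (hεd : ∀ t ∈ Ici (0 : ℝ), HasDerivWithinAt ε (ε' t) (Ici 0) t)
    (hεpos : ∀ t ∈ Ici (0 : ℝ), 0 < ε t)
    (hεrate : Tendsto (fun t => |ε' t| / (ε t ^ ((5 : ℝ) / 2))) atTop (nhds 0)) :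
    Tendsto (fun T => ∫ t in (0 : ℝ)..T, ε t) atTop atTop := by
  obtain ⟨t₀, ht₀⟩ :=
    eventually_atTop.1 (hεrate.eventually (gt_mem_nhds (by norm_num : (0 : ℝ) < 2 / 3)))
  have hsub : Ici (max t₀ 0) ⊆ Ici 0 := Ici_subset_Ici.2 (le_max_right _ _)
  have hrate : ∀ t ∈ Ici (max t₀ 0), 3 / 2 * |ε' t| ≤ ε t ^ ((3 : ℝ) / 2 + 1) := by
    intro t ht
    have hεt := hεpos t (hsub ht)
    have hlt := ht₀ t (le_of_max_le_left ht)
    rw [div_lt_iff₀ (by positivity)] at hlt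
    rw [show (3 : ℝ) / 2 + 1 = 5 / 2 by norm_num]
    linarith
  refine tendsto_intervalIntegral_atTop_of_le (le_max_right t₀ 0)
    (fun t ht => (hεd t ht).continuousWithinAt) (fun T => ?_)
    (add_rpow_neg_inv_le (by norm_num) (fun t ht => (hεd t (hsub ht)).mono hsub)
      (fun t ht => hεpos t (hsub ht)) hrate)
    (tendsto_intervalIntegral_add_rpow_atTop (by norm_num) _ _)
  exact (IntervalIntegrable.comp_add_right_iff).2
    (intervalIntegral.intervalIntegrable_rpow' (by norm_num))

/-- Under conditions (1.4) on `ε`, the integral `∫₀^∞ ε(t) dt` diverges, i.e.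
`∫₀^T ε(t) dt → ∞` as `T → ∞`. -/
theorem stmt3 (ε ε' : ℝ → ℝ)
    (hεC1 : ContDiffOn ℝ 1 ε (Ici 0))
    (hεd : ∀ t ∈ Ici (0 : ℝ), HasDerivWithinAt ε (ε' t) (Ici 0) t)
    (hεpos : ∀ t ∈ Ici (0 : ℝ), 0 < ε t)
    (hεdec : AntitoneOn ε (Ici 0))
    (hεlim : Tendsto ε atTop (nhds 0))
    (hεrate : Tendsto (fun t => |ε' t| / (ε t ^ ((5 : ℝ) / 2))) atTop (nhds 0)) :
    Tendsto (fun T => ∫ t in (0 : ℝ)..T, ε t) atTop atTop :=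
  stmt3_general ε ε' hεd hεpos hεrate
end

section
/- Let H be a complex Hilbert space and B : H →L[ℂ] H a self-adjoint, nonnegative, injective bounded operator. Then for every y ∈ H, ‖(B + ε•I)^{-1} (B y) − y‖ → 0 as ε → 0⁺. -/
/-!
Write `R ε := ε • (B + ε)⁻¹`. Since `(B + ε)⁻¹ B = 1 - R ε`, the error is `-R ε y`.
Nonnegativity of `B` gives `ε ‖x‖ ≤ ‖(B + ε) x‖`, hence `‖R ε‖ ≤ 1`, and on the range of `B`
we have `R ε (B x) = ε • (x - R ε x) = O(ε)`. The range of `B` is dense because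
`(range B)ᗮ = ker B = 0`, and a uniformly bounded family of operators that tends to `0` on a dense
set tends to `0` everywhere.
-/

open ContinuousLinearMap Filter Set Topology

theorem Ring.inverse_add_smul_one_mul {R A : Type*} [CommSemiring R] [Ring A] [Algebra R A]
    {a : A} {c : R} (h : IsUnit (a + c • 1)) :
    Ring.inverse (a + c • 1) * a = 1 - c • Ring.inverse (a + c • 1) := by
  rw [eq_sub_iff_add_eq, ← mul_smul_one c (Ring.inverse _), ← mul_add]
  exact Ring.inverse_mul_cancel _ h

theorem ContinuousLinearMap.tendsto_apply_zero_of_dense_of_norm_le {𝕜 E F ι : Type*}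
    [NontriviallyNormedField 𝕜] [SeminormedAddCommGroup E] [NormedSpace 𝕜 E]
    [SeminormedAddCommGroup F] [NormedSpace 𝕜 F]
    {l : Filter ι} {T : ι → E →L[𝕜] F} {C : ℝ} {S : Set E} (hS : Dense S)
    (hT : ∀ᶠ i in l, ‖T i‖ ≤ C) (hTS : ∀ x ∈ S, Tendsto (fun i ↦ T i x) l (𝓝 0)) (y : E) :
    Tendsto (fun i ↦ T i y) l (𝓝 0) := by
  rw [Metric.tendsto_nhds]
  intro η hη
  have hC : 0 < |C| + 1 := by positivity
  obtain ⟨x, hxS, hyx⟩ := hS.exists_dist_lt y (div_pos (half_pos hη) hC)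
  filter_upwards [hT, Metric.tendsto_nhds.mp (hTS x hxS) _ (half_pos hη)] with i hTi hTix
  rw [dist_zero_right] at hTix ⊢
  rw [dist_eq_norm, lt_div_iff₀ hC] at hyx
  calc ‖T i y‖ ≤ ‖T i (y - x)‖ + ‖T i x‖ := by simpa using norm_add_le (T i (y - x)) (T i x)
    _ ≤ C * ‖y - x‖ + ‖T i x‖ := by
        gcongr; exact (T i).le_of_opNorm_le hTi _
    _ < η / 2 + η / 2 := by
        gcongr
        nlinarith [le_abs_self C, norm_nonneg (y - x)]
    _ = η := add_halves η

theorem IsStarNormal.denseRange_of_injective {𝕜 E : Type*} [RCLike 𝕜] [NormedAddCommGroup E]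
    [InnerProductSpace 𝕜 E] [CompleteSpace E] {T : E →L[𝕜] E} (hT : IsStarNormal T)
    (hinj : Function.Injective T) : DenseRange T := by
  have : (T : E →ₗ[𝕜] E).range.topologicalClosure = ⊤ := by
    rw [Submodule.topologicalClosure_eq_top_iff, hT.orthogonal_range,
      LinearMap.ker_eq_bot.mpr hinj]
  rw [DenseRange, ← coe_coe, ← LinearMap.coe_range]
  exact Submodule.dense_iff_topologicalClosure_eq_top.mpr this

namespace ContinuousLinearMap

variable {H : Type*} [NormedAddCommGroup H] [InnerProductSpace ℂ H] {B : H →L[ℂ] H}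

theorem mul_norm_sq_le_re_inner_add_smul_one_apply (hB : ∀ x : H, 0 ≤ (inner ℂ (B x) x).re)
    (ε : ℝ) (x : H) : ε * ‖x‖ ^ 2 ≤ (inner ℂ ((B + ε • 1) x) x).re := by
  have hx : (inner ℂ (ε • x) x).re = ε * ‖x‖ ^ 2 := by
    rw [RCLike.real_smul_eq_coe_smul (K := ℂ), inner_smul_real_left, Complex.real_smul,
      Complex.re_ofReal_mul]
    exact congrArg (ε * ·) (inner_self_eq_norm_sq (𝕜 := ℂ) x)
  simpa only [add_apply, smul_apply, one_apply_eq_self, inner_add_left, Complex.add_re, hx,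
    le_add_iff_nonneg_left] using hB x

theorem mul_norm_le_norm_add_smul_one_apply (hB : ∀ x : H, 0 ≤ (inner ℂ (B x) x).re)
    (ε : ℝ) (x : H) : ε * ‖x‖ ≤ ‖(B + ε • 1) x‖ := by
  rcases (norm_nonneg x).eq_or_lt with hx | hx
  · simp [← hx]
  refine le_of_mul_le_mul_right ?_ hx
  calc ε * ‖x‖ * ‖x‖ = ε * ‖x‖ ^ 2 := by ring
    _ ≤ (inner ℂ ((B + ε • 1) x) x).re := mul_norm_sq_le_re_inner_add_smul_one_apply hB ε x
    _ ≤ ‖(B + ε • 1) x‖ * ‖x‖ := (Complex.re_le_norm _).trans (norm_inner_le_norm _ _)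

theorem isUnit_add_smul_one [CompleteSpace H] (hB : ∀ x : H, 0 ≤ (inner ℂ (B x) x).re)
    {ε : ℝ} (hε : 0 < ε) : IsUnit (B + ε • 1) :=
  isUnit_of_forall_le_norm_inner_map _ (c := ⟨ε, hε.le⟩) hε fun x ↦ by
    calc ‖x‖ ^ 2 * ε = ε * ‖x‖ ^ 2 := mul_comm _ _
      _ ≤ _ := mul_norm_sq_le_re_inner_add_smul_one_apply hB ε x
      _ ≤ _ := Complex.re_le_norm _

theorem norm_smul_inverse_add_smul_one_le [CompleteSpace H]
    (hB : ∀ x : H, 0 ≤ (inner ℂ (B x) x).re) {ε : ℝ} (hε : 0 < ε) :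
    ‖ε • Ring.inverse (B + ε • 1)‖ ≤ 1 := by
  refine opNorm_le_bound _ zero_le_one fun v ↦ ?_
  have hv : (B + ε • 1) (Ring.inverse (B + ε • 1) v) = v := by
    rw [← mul_apply_eq_comp, Ring.mul_inverse_cancel _ (isUnit_add_smul_one hB hε),
      one_apply_eq_self]
  rw [smul_apply, norm_smul, Real.norm_of_nonneg hε.le, one_mul]
  simpa [hv] using mul_norm_le_norm_add_smul_one_apply hB ε (Ring.inverse (B + ε • 1) v)

theorem inverse_add_smul_one_apply_apply {ε : ℝ} (h : IsUnit (B + ε • 1)) (x : H) :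
    Ring.inverse (B + ε • 1) (B x) = x - (ε • Ring.inverse (B + ε • 1)) x := by
  rw [← mul_apply_eq_comp, Ring.inverse_add_smul_one_mul h, sub_apply, one_apply_eq_self]

theorem norm_smul_inverse_add_smul_one_apply_le [CompleteSpace H]
    (hB : ∀ x : H, 0 ≤ (inner ℂ (B x) x).re) {ε : ℝ} (hε : 0 < ε) (x : H) :
    ‖(ε • Ring.inverse (B + ε • 1)) (B x)‖ ≤ 2 * ε * ‖x‖ := by
  set R : H →L[ℂ] H := ε • Ring.inverse (B + ε • 1)
  have hRB : R (B x) = ε • (x - R x) := by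
    rw [smul_apply, inverse_add_smul_one_apply_apply (isUnit_add_smul_one hB hε)]
  have hRx : ‖R x‖ ≤ ‖x‖ :=
    (R.le_of_opNorm_le (norm_smul_inverse_add_smul_one_le hB hε) x).trans_eq (one_mul _)
  calc ‖R (B x)‖ = ε * ‖x - R x‖ := by rw [hRB, norm_smul, Real.norm_of_nonneg hε.le]
    _ ≤ ε * (‖x‖ + ‖x‖) := by gcongr; exact (norm_sub_le _ _).trans (by gcongr)
    _ = 2 * ε * ‖x‖ := by ring

end ContinuousLinearMap

/-- For `B` self-adjoint, nonnegative and injective, the Tikhonov-regularized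
solution `(B + εI)⁻¹ B y` converges in norm to `y` as `ε → 0⁺`. -/
theorem stmt10 {H : Type*} [NormedAddCommGroup H] [InnerProductSpace ℂ H] [CompleteSpace H]
    (B : H →L[ℂ] H) (hB : IsSelfAdjoint B)
    (hBnn : ∀ x : H, 0 ≤ (inner ℂ (B x) x : ℂ).re)
    (hBinj : Function.Injective B) (y : H) :
    Tendsto (fun ε : ℝ => ‖Ring.inverse (B + ε • (1 : H →L[ℂ] H)) (B y) - y‖)
      (nhdsWithin 0 (Ioi 0)) (nhds 0) := by
  set R : ℝ → H →L[ℂ] H := fun ε ↦ ε • Ring.inverse (B + ε • 1)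
  have hR_le : ∀ᶠ ε in 𝓝[>] 0, ‖R ε‖ ≤ 1 :=
    eventually_nhdsWithin_of_forall fun ε hε ↦ norm_smul_inverse_add_smul_one_le hBnn hε
  have hR_range : ∀ v ∈ range B, Tendsto (fun ε ↦ R ε v) (𝓝[>] 0) (𝓝 0) := by
    rintro _ ⟨x, rfl⟩
    refine squeeze_zero_norm' (eventually_nhdsWithin_of_forall fun ε hε ↦
      norm_smul_inverse_add_smul_one_apply_le hBnn hε x) ?_
    exact (Continuous.tendsto' (by fun_prop) 0 0 (by simp)).mono_left nhdsWithin_le_nhds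
  have hRy := tendsto_apply_zero_of_dense_of_norm_le
    (hB.isStarNormal.denseRange_of_injective hBinj) hR_le hR_range y
  refine (tendsto_zero_iff_norm_tendsto_zero.mp hRy).congr'
    (eventually_nhdsWithin_of_forall fun ε hε ↦ ?_)
  dsimp only
  rw [inverse_add_smul_one_apply_apply (isUnit_add_smul_one hBnn hε), sub_sub_cancel_left,
    norm_neg]
end

section
/- Let H be a complex Hilbert space and B : H → H a (not necessarily linear) map that is monotone, i.e. re⟪B u − B v, u − v⟫ ≥ 0 for all u, v ∈ H, and hemicontinuous, i.e. for every x, p ∈ H the map t ↦ B(x + t • p) from ℝ to H is continuous at t = 0 with respect to the weak topology on H. If a sequence (xₙ) converges weakly to x ∈ H and (B xₙ) converges in norm to f ∈ H, then B x = f. -/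
open Filter Topology RCLike
open scoped InnerProductSpace

/-!
Monotonicity passes to the limit, because `⟪B xₙ, xₙ⟫` pairs a norm-convergent sequence with a
weakly convergent (hence bounded) one: `re ⟪f - B v, x - v⟫ ≥ 0` for every `v`. Minty's trick then
tests this with `v = x - t p`, divides by `t > 0` and lets `t → 0⁺` using hemicontinuity, which
gives `re ⟪f - B x, p⟫ ≥ 0` for every `p`, hence `B x = f`.
-/

section MonotoneOperator

variable {𝕜 E : Type*} [RCLike 𝕜] [NormedAddCommGroup E] [InnerProductSpace 𝕜 E]

variable (𝕜) in
def IsMonotoneOperator (B : E → E) : Prop :=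
  ∀ u v, 0 ≤ re ⟪B u - B v, u - v⟫_𝕜

-- Real scalars act through `𝕜`: a general `InnerProductSpace 𝕜 E` has no `ℝ`-module instance.
variable (𝕜) in
def IsHemicontinuous (B : E → E) : Prop :=
  ∀ x p z, Tendsto (fun t : ℝ => ⟪z, B (x + (t : 𝕜) • p)⟫_𝕜) (𝓝 0) (𝓝 ⟪z, B x⟫_𝕜)

theorem exists_norm_le_of_forall_tendsto_inner [CompleteSpace E] {u : ℕ → E} {x : E}
    (hu : ∀ z, Tendsto (fun n => ⟪z, u n⟫_𝕜) atTop (𝓝 ⟪z, x⟫_𝕜)) : ∃ M, ∀ n, ‖u n‖ ≤ M := by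
  have hbdd : ∀ z : E, ∃ C, ∀ n, ‖InnerProductSpace.toDual 𝕜 E (u n) z‖ ≤ C := fun z => by
    obtain ⟨C, hC⟩ := (hu z).norm.bddAbove_range
    exact ⟨C, fun n => by simpa [norm_inner_symm] using hC ⟨n, rfl⟩⟩
  obtain ⟨C, hC⟩ := banach_steinhaus hbdd
  exact ⟨C, fun n => by simpa using hC n⟩

theorem tendsto_inner_of_tendsto_of_forall_tendsto_inner [CompleteSpace E] {u v : ℕ → E}
    {x y : E} (hv : Tendsto v atTop (𝓝 y))
    (hu : ∀ z, Tendsto (fun n => ⟪z, u n⟫_𝕜) atTop (𝓝 ⟪z, x⟫_𝕜)) :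
    Tendsto (fun n => ⟪v n, u n⟫_𝕜) atTop (𝓝 ⟪y, x⟫_𝕜) := by
  obtain ⟨M, hM⟩ := exists_norm_le_of_forall_tendsto_inner hu
  have hsmall : Tendsto (fun n => ⟪v n - y, u n⟫_𝕜) atTop (𝓝 0) := by
    rw [tendsto_zero_iff_norm_tendsto_zero]
    refine squeeze_zero (fun n => norm_nonneg _) (fun n => ?_)
      (by simpa using (tendsto_iff_norm_sub_tendsto_zero.mp hv).mul_const M)
    exact (norm_inner_le_norm _ _).trans (by gcongr; exact hM n)
  simpa [← inner_add_left] using hsmall.add (hu y)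

theorem IsMonotoneOperator.re_inner_sub_nonneg_of_tendsto [CompleteSpace E] {B : E → E}
    (hB : IsMonotoneOperator 𝕜 B) {u : ℕ → E} {x f : E}
    (hu : ∀ z, Tendsto (fun n => ⟪z, u n⟫_𝕜) atTop (𝓝 ⟪z, x⟫_𝕜))
    (hBu : Tendsto (fun n => B (u n)) atTop (𝓝 f)) (v : E) :
    0 ≤ re ⟪f - B v, x - v⟫_𝕜 := by
  have hu_sub : ∀ z, Tendsto (fun n => ⟪z, u n - v⟫_𝕜) atTop (𝓝 ⟪z, x - v⟫_𝕜) := fun z => by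
    simpa only [inner_sub_right] using (hu z).sub_const ⟪z, v⟫_𝕜
  have hlim := tendsto_inner_of_tendsto_of_forall_tendsto_inner (hBu.sub_const (B v)) hu_sub
  exact ge_of_tendsto' ((continuous_re.tendsto _).comp hlim) fun n => hB (u n) v

theorem eq_zero_of_forall_re_inner_nonneg {w : E} (h : ∀ p, 0 ≤ re ⟪w, p⟫_𝕜) : w = 0 := by
  have := h (-w)
  rw [inner_neg_right, map_neg, neg_nonneg] at this
  exact re_inner_self_nonpos.mp this

theorem IsHemicontinuous.eq_of_forall_re_inner_nonneg {B : E → E} (hB : IsHemicontinuous 𝕜 B)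
    {x f : E} (h : ∀ v, 0 ≤ re ⟪f - B v, x - v⟫_𝕜) : B x = f := by
  suffices ∀ p, 0 ≤ re ⟪f - B x, p⟫_𝕜 from
    (sub_eq_zero.mp (eq_zero_of_forall_re_inner_nonneg this)).symm
  intro p
  have hlim : Tendsto (fun t : ℝ => re ⟪p, f - B (x + (t : 𝕜) • -p)⟫_𝕜) (𝓝[>] 0)
      (𝓝 (re ⟪p, f - B x⟫_𝕜)) := by
    simp only [inner_sub_right]
    exact ((continuous_re.tendsto _).comp (tendsto_const_nhds.sub (hB x (-p) p))).mono_left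
      nhdsWithin_le_nhds
  have hpos : ∀ t ∈ Set.Ioi (0 : ℝ), 0 ≤ re ⟪p, f - B (x + (t : 𝕜) • -p)⟫_𝕜 := by
    intro t ht
    have := h (x - (t : 𝕜) • p)
    rw [sub_sub_cancel, inner_smul_right, re_ofReal_mul] at this
    rw [smul_neg, ← sub_eq_add_neg, inner_re_symm]
    exact nonneg_of_mul_nonneg_right this ht
  rw [inner_re_symm]
  exact ge_of_tendsto hlim (eventually_nhdsWithin_of_forall hpos)

end MonotoneOperator

/-- Minty-type claim: a monotone, hemicontinuous (possibly nonlinear) map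
`B : H → H` is weakly closed: if `xₙ ⇀ x` weakly and `B xₙ → f` in norm, then `B x = f`.
Hemicontinuity means that for each `x, p`, the map `t ↦ B(x + t p)` is weakly continuous
at `t = 0`, i.e. all inner products converge. Weak convergence of `xₙ` to `x` means
`⟪z, xₙ⟫ → ⟪z, x⟫` for all `z`. -/
theorem stmt14 {H : Type*} [NormedAddCommGroup H] [InnerProductSpace ℂ H] [CompleteSpace H]
    (B : H → H)
    (hmono : ∀ u v : H, 0 ≤ (inner ℂ (B u - B v) (u - v) : ℂ).re)
    (hhemi : ∀ x p z : H,
      Tendsto (fun t : ℝ => (inner ℂ z (B (x + t • p)) : ℂ)) (nhds 0) (nhds (inner ℂ z (B x))))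
    (x : H) (xseq : ℕ → H) (f : H)
    (hweak : ∀ z : H, Tendsto (fun n => (inner ℂ z (xseq n) : ℂ)) atTop (nhds (inner ℂ z x)))
    (hnorm : Tendsto (fun n => B (xseq n)) atTop (nhds f)) :
    B x = f := by
  have hB_mono : IsMonotoneOperator ℂ B := hmono
  have hB_hemi : IsHemicontinuous ℂ B := fun x p z => by
    simpa only [← RCLike.real_smul_eq_coe_smul] using hhemi x p z
  exact hB_hemi.eq_of_forall_re_inner_nonneg (hB_mono.re_inner_sub_nonneg_of_tendsto hweak hnorm)
end

section
/- Let H be a complex Hilbert space, A : H →L[ℂ] H a bounded linear operator, y ∈ H, f := A y, B := A†A, and let δ > 0, ε > 0, and f_δ ∈ H with ‖f_δ − f‖ ≤ δ. Then ‖(B + ε•I)^{-1}(A† f_δ) − y‖ ≤ ‖(B + ε•I)^{-1}(B y) − y‖ + δ/(2√ε). -/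
/-!
Linearity of `(A†A + ε)⁻¹` splits the error into the noise-free error and
`x := (A†A + ε)⁻¹ A† g` with `g := f_δ - A y`. Pairing `(A†A + ε) x = A† g` with `x` gives
`‖A x‖² + ε ‖x‖² = Re ⟪g, A x⟫ ≤ ‖g‖ ‖A x‖ ≤ ‖A x‖² + ‖g‖² / 4`, hence `‖x‖ ≤ ‖g‖ / (2 √ε)`.
-/

open ContinuousLinearMap
open scoped InnerProductSpace

section Tikhonov

variable {𝕜 E F : Type*} [RCLike 𝕜] [NormedAddCommGroup E] [InnerProductSpace 𝕜 E]
  [NormedSpace ℝ E] [IsScalarTower ℝ 𝕜 E] [CompleteSpace E]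
  [NormedAddCommGroup F] [InnerProductSpace 𝕜 F] [CompleteSpace F]

theorem re_inner_adjoint_comp_self_add_smul_one_apply (A : E →L[𝕜] F) (ε : ℝ) (x : E) :
    RCLike.re ⟪(adjoint A ∘L A + ε • (1 : E →L[𝕜] E)) x, x⟫_𝕜 = ‖A x‖ ^ 2 + ε * ‖x‖ ^ 2 := by
  rw [add_apply, comp_apply, smul_apply, one_apply_eq_self, RCLike.real_smul_eq_coe_smul (K := 𝕜),
    inner_add_left, adjoint_inner_left, inner_smul_left, inner_self_eq_norm_sq_to_K,
    inner_self_eq_norm_sq_to_K, map_add, RCLike.conj_ofReal]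
  norm_cast

theorem norm_le_of_adjoint_comp_self_add_smul_one_apply_eq (A : E →L[𝕜] F) {ε : ℝ} (hε : 0 < ε)
    {x : E} {g : F} (hx : (adjoint A ∘L A + ε • (1 : E →L[𝕜] E)) x = adjoint A g) :
    ‖x‖ ≤ ‖g‖ / (2 * √ε) := by
  have hcoercive : ‖A x‖ ^ 2 + ε * ‖x‖ ^ 2 ≤ ‖g‖ * ‖A x‖ := by
    rw [← re_inner_adjoint_comp_self_add_smul_one_apply, hx, adjoint_inner_left]
    exact re_inner_le_norm g (A x)
  have hsq : (2 * √ε * ‖x‖) ^ 2 ≤ ‖g‖ ^ 2 := by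
    rw [mul_pow, mul_pow, Real.sq_sqrt hε.le]
    nlinarith [sq_nonneg (2 * ‖A x‖ - ‖g‖)]
  rw [le_div_iff₀ (by positivity), mul_comm]
  exact (pow_le_pow_iff_left₀ (by positivity) (norm_nonneg g) two_ne_zero).1 hsq

theorem norm_inverse_adjoint_comp_self_add_smul_one_apply_adjoint_le (A : E →L[𝕜] F) {ε : ℝ}
    (hε : 0 < ε) (g : F) :
    ‖Ring.inverse (adjoint A ∘L A + ε • (1 : E →L[𝕜] E)) (adjoint A g)‖ ≤ ‖g‖ / (2 * √ε) := by
  set T := adjoint A ∘L A + ε • (1 : E →L[𝕜] E)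
  by_cases hT : IsUnit T
  · refine norm_le_of_adjoint_comp_self_add_smul_one_apply_eq A hε ?_
    rw [← mul_apply_eq_comp, Ring.mul_inverse_cancel T hT, one_apply_eq_self]
  · rw [Ring.inverse_non_unit T hT, zero_apply, norm_zero]
    positivity

end Tikhonov

theorem stmt15_general {H : Type*} [NormedAddCommGroup H] [InnerProductSpace ℂ H] [CompleteSpace H]
    (A : H →L[ℂ] H) (y : H) (f : H) (hf : f = A y)
    (B : H →L[ℂ] H) (hB : B = adjoint A * A)
    (δ ε : ℝ) (hε : 0 < ε)
    (fδ : H) (hfδ : ‖fδ - f‖ ≤ δ) :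
    ‖Ring.inverse (B + ε • (1 : H →L[ℂ] H)) (adjoint A fδ) - y‖ ≤
      ‖Ring.inverse (B + ε • (1 : H →L[ℂ] H)) (B y) - y‖ + δ / (2 * Real.sqrt ε) := by
  subst hf hB
  set S := Ring.inverse (adjoint A * A + ε • (1 : H →L[ℂ] H))
  have hsplit : S (adjoint A fδ) - y = (S ((adjoint A * A) y) - y) + S (adjoint A (fδ - A y)) := by
    rw [map_sub, map_sub, mul_apply_eq_comp]
    abel
  have hnoise : ‖S (adjoint A (fδ - A y))‖ ≤ δ / (2 * √ε) :=
    (norm_inverse_adjoint_comp_self_add_smul_one_apply_adjoint_le A hε _).trans (by gcongr)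
  rw [hsplit]
  exact (norm_add_le _ _).trans (add_le_add_right hnoise _)

/-- error splitting for Tikhonov regularization with noisy data:
`‖(B + εI)⁻¹ A† f_δ − y‖ ≤ ‖(B + εI)⁻¹ B y − y‖ + δ/(2√ε)` when `‖f_δ − A y‖ ≤ δ`. -/
theorem stmt15 {H : Type*} [NormedAddCommGroup H] [InnerProductSpace ℂ H] [CompleteSpace H]
    (A : H →L[ℂ] H) (y : H) (f : H) (hf : f = A y)
    (B : H →L[ℂ] H) (hB : B = adjoint A * A)
    (δ ε : ℝ) (hδ : 0 < δ) (hε : 0 < ε)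
    (fδ : H) (hfδ : ‖fδ - f‖ ≤ δ) :
    ‖Ring.inverse (B + ε • (1 : H →L[ℂ] H)) (adjoint A fδ) - y‖ ≤
      ‖Ring.inverse (B + ε • (1 : H →L[ℂ] H)) (B y) - y‖ + δ / (2 * Real.sqrt ε) :=
  stmt15_general A y f hf B hB δ ε hε fδ hfδ
end

section
/- Let ε : ℝ → ℝ be continuously differentiable on [0,∞) with ε(t) > 0 for all t ≥ 0, ε monotonically decreasing with ε(t) → 0 as t → ∞, and |ε'(t)|/ε(t)^{5/2} → 0 as t → ∞. Then exp(−∫₀^t ε(s) ds) · ∫₀^t exp(∫₀^τ ε(s) ds) · |ε'(τ)|/(2 ε(τ)^{3/2}) dτ → 0 as t → ∞. -/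
/-! With `E t = ∫₀^t ε` and `h = |ε'| / (2 ε^{3/2})`, the rate hypothesis says exactly
`h = o(ε)`. Since `(exp ∘ E)' = ε · exp ∘ E`, integrating `exp E · h = o(ε · exp E)` gives
`∫₀^t exp E · h = o(exp (E t))` as soon as `∫₀^t ε · exp E = exp (E t) - 1 → ∞`.
For the divergence of `E` note that `ψ = ε^{-1/2}` has `ψ' = -ε' / (2 ε^{3/2}) ≤ h ≤ ε`
eventually, so `E` grows at least like `ψ`, and `ψ → ∞` because `ε → 0⁺`. -/

open Filter Set MeasureTheory Asymptotics intervalIntegral Topology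

theorem MeasureTheory.LocallyIntegrableOn.intervalIntegrable_of_Ici {E : Type*}
    [NormedAddCommGroup E] {f : ℝ → E} {a b c : ℝ}
    (hf : LocallyIntegrableOn f (Ici a)) (hb : a ≤ b) (hc : a ≤ c) :
    IntervalIntegrable f volume b c :=
  (hf.integrableOn_compact_subset (fun _ hx => le_trans (le_inf hb hc) hx.1)
    isCompact_uIcc).intervalIntegrable

theorem ContinuousOn.hasDerivAt_integral_of_Ici {E : Type*} [NormedAddCommGroup E]
    [NormedSpace ℝ E] [CompleteSpace E] {f : ℝ → E} {a : ℝ} (hf : ContinuousOn f (Ici a)) {x : ℝ}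
    (hx : a < x) : HasDerivAt (fun t => ∫ s in a..t, f s) (f x) x :=
  integral_hasDerivAt_right
    ((hf.locallyIntegrableOn measurableSet_Ici).intervalIntegrable_of_Ici le_rfl hx.le)
    (hf.stronglyMeasurableAtFilter_nhdsWithin measurableSet_Ici x |>.filter_mono
      (by rw [nhdsWithin_eq_nhds.2 (Ici_mem_nhds hx)]))
    (hf.continuousAt (Ici_mem_nhds hx))

theorem ContinuousOn.continuousOn_integral_of_Ici {E : Type*} [NormedAddCommGroup E]
    [NormedSpace ℝ E] {f : ℝ → E} {a : ℝ} (hf : ContinuousOn f (Ici a)) :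
    ContinuousOn (fun t => ∫ s in a..t, f s) (Ici a) := by
  intro x hx
  have hIcc : ContinuousOn (fun t => ∫ s in a..t, f s) (uIcc a (x + 1)) :=
    continuousOn_primitive_interval
      ((hf.locallyIntegrableOn measurableSet_Ici).integrableOn_compact_subset
        (fun _ hy => le_trans (le_inf le_rfl (by linarith [mem_Ici.1 hx])) hy.1) isCompact_uIcc)
  rw [uIcc_of_le (by linarith [mem_Ici.1 hx]), ← Ici_inter_Iic] at hIcc
  exact (hIcc x ⟨hx, by simp⟩).mono_of_mem_nhdsWithin
    (inter_mem_nhdsWithin _ (Iic_mem_nhds (lt_add_one x)))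

/-- Continuous analogue of `Asymptotics.IsLittleO.sum_range`. -/
theorem Asymptotics.IsLittleO.intervalIntegral_atTop {E : Type*} [NormedAddCommGroup E]
    [NormedSpace ℝ E] {f : ℝ → E} {g : ℝ → ℝ} {a : ℝ}
    (h : f =o[atTop] g) (hf : LocallyIntegrableOn f (Ici a)) (hg : LocallyIntegrableOn g (Ici a))
    (hg₀ : ∀ᶠ t in atTop, 0 ≤ g t) (hG : Tendsto (fun t => ∫ s in a..t, g s) atTop atTop) :
    (fun t => ∫ s in a..t, f s) =o[atTop] fun t => ∫ s in a..t, g s := by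
  refine isLittleO_iff.2 fun c hc => ?_
  obtain ⟨T, hT⟩ := eventually_atTop.1
    ((isLittleO_iff.1 h (half_pos hc)).and (hg₀.and (eventually_ge_atTop a)))
  have haT : a ≤ T := (hT T le_rfl).2.2
  set K := ‖∫ s in a..T, f s‖ + c / 2 * |∫ s in a..T, g s|
  have hK : (fun _ => K) =o[atTop] fun t => ∫ s in a..t, g s :=
    isLittleO_const_left.2 (Or.inr (tendsto_norm_atTop_atTop.comp hG))
  filter_upwards [isLittleO_iff.1 hK (half_pos hc), eventually_ge_atTop T] with t hKt hTt
  have hfsplit : ∫ s in a..t, f s = (∫ s in a..T, f s) + ∫ s in T..t, f s :=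
    (integral_add_adjacent_intervals (hf.intervalIntegrable_of_Ici le_rfl haT)
      (hf.intervalIntegrable_of_Ici haT (haT.trans hTt))).symm
  have hgsplit : ∫ s in a..t, g s = (∫ s in a..T, g s) + ∫ s in T..t, g s :=
    (integral_add_adjacent_intervals (hg.intervalIntegrable_of_Ici le_rfl haT)
      (hg.intervalIntegrable_of_Ici haT (haT.trans hTt))).symm
  have htail : ‖∫ s in T..t, f s‖ ≤ c / 2 * ∫ s in T..t, g s := by
    rw [← intervalIntegral.integral_const_mul]
    refine norm_integral_le_of_norm_le hTt (ae_of_all _ fun s hs => ?_)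
      ((hg.intervalIntegrable_of_Ici haT (haT.trans hTt)).const_mul _)
    have hs := hT s hs.1.le
    simpa [Real.norm_eq_abs, abs_of_nonneg hs.2.1] using hs.1
  calc ‖∫ s in a..t, f s‖
      ≤ ‖∫ s in a..T, f s‖ + c / 2 * ((∫ s in a..t, g s) - ∫ s in a..T, g s) := by
        rw [hfsplit, hgsplit, add_sub_cancel_left]
        exact (norm_add_le _ _).trans (by gcongr)
    _ ≤ K + c / 2 * ‖∫ s in a..t, g s‖ := by
        have hdiff : (∫ s in a..t, g s) - ∫ s in a..T, g s ≤
            |∫ s in a..T, g s| + ‖∫ s in a..t, g s‖ := by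
          linarith [neg_abs_le (∫ s in a..T, g s), Real.le_norm_self (∫ s in a..t, g s)]
        rw [add_assoc, ← mul_add]
        gcongr
    _ ≤ c * ‖∫ s in a..t, g s‖ := by linarith [Real.le_norm_self K]

theorem integral_exp_integral_mul_eq {ε : ℝ → ℝ} {a t : ℝ} (hε : ContinuousOn ε (Ici a))
    (ht : a ≤ t) :
    ∫ τ in a..t, Real.exp (∫ s in a..τ, ε s) * ε τ = Real.exp (∫ s in a..t, ε s) - 1 := by
  have hE := hε.continuousOn_integral_of_Ici.rexp
  rw [integral_eq_sub_of_hasDerivAt_of_le ht (hE.mono Icc_subset_Ici_self)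
    (fun x hx => (hε.hasDerivAt_integral_of_Ici hx.1).exp)
    (((hE.mul hε).mono Icc_subset_Ici_self).intervalIntegrable_of_Icc ht), integral_same,
    Real.exp_zero]

theorem tendsto_integral_atTop_of_hasDerivAt_le {ψ ψ' ε : ℝ → ℝ} {a : ℝ}
    (hε : LocallyIntegrableOn ε (Ici a)) (hψ : Tendsto ψ atTop atTop)
    (hψ' : ∀ᶠ t in atTop, HasDerivAt ψ (ψ' t) t) (hle : ∀ᶠ t in atTop, ψ' t ≤ ε t) :
    Tendsto (fun t => ∫ s in a..t, ε s) atTop atTop := by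
  obtain ⟨T, hT⟩ := eventually_atTop.1 ((hψ'.and hle).and (eventually_ge_atTop a))
  have haT : a ≤ T := (hT T le_rfl).2
  have hbound : ∀ t ≥ T, ψ t + ((∫ s in a..T, ε s) - ψ T) ≤ ∫ s in a..t, ε s := by
    intro t ht
    rw [← integral_add_adjacent_intervals (hε.intervalIntegrable_of_Ici le_rfl haT)
      (hε.intervalIntegrable_of_Ici haT (haT.trans ht))]
    have := sub_le_integral_of_hasDeriv_right_of_le ht
      (fun x hx => (hT x hx.1).1.1.continuousAt.continuousWithinAt)
      (fun x hx => (hT x hx.1.le).1.1.hasDerivWithinAt)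
      (hε.integrableOn_compact_subset (fun x hx => haT.trans hx.1) isCompact_Icc)
      (fun x hx => (hT x hx.1.le).1.2)
    linarith
  exact tendsto_atTop_mono' _ ((eventually_ge_atTop T).mono hbound)
    (hψ.atTop_add tendsto_const_nhds)

theorem HasDerivAt.rpow_neg_half {f : ℝ → ℝ} {f' x : ℝ} (hf : HasDerivAt f f' x)
    (hx : 0 < f x) :
    HasDerivAt (fun t => f t ^ (-(1 : ℝ) / 2)) (-(f' / (2 * f x ^ ((3 : ℝ) / 2)))) x := by
  convert hf.rpow_const (p := -(1 : ℝ) / 2) (Or.inl hx.ne') using 1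
  rw [show -(1 : ℝ) / 2 - 1 = -(3 / 2) by norm_num, Real.rpow_neg hx.le]
  ring

theorem isLittleO_abs_div_rpow_three_halves {ε ε' : ℝ → ℝ} (hε : ∀ᶠ t in atTop, 0 < ε t)
    (hrate : Tendsto (fun t => |ε' t| / ε t ^ ((5 : ℝ) / 2)) atTop (𝓝 0)) :
    (fun t => |ε' t| / (2 * ε t ^ ((3 : ℝ) / 2))) =o[atTop] ε := by
  refine (isLittleO_iff_tendsto' (hε.mono fun t ht h0 => absurd h0 ht.ne')).2 ?_
  refine (zero_div (2 : ℝ) ▸ hrate.div_const 2).congr' (hε.mono fun t ht => ?_)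
  rw [show (5 : ℝ) / 2 = 3 / 2 + 1 by norm_num, Real.rpow_add ht, Real.rpow_one]
  ring

theorem tendsto_integral_atTop_of_isLittleO {ε ε' : ℝ → ℝ} {a : ℝ}
    (hint : LocallyIntegrableOn ε (Ici a)) (hε : ∀ᶠ t in atTop, 0 < ε t)
    (hlim : Tendsto ε atTop (𝓝 0)) (hderiv : ∀ᶠ t in atTop, HasDerivAt ε (ε' t) t)
    (hsmall : (fun t => |ε' t| / (2 * ε t ^ ((3 : ℝ) / 2))) =o[atTop] ε) :
    Tendsto (fun t => ∫ s in a..t, ε s) atTop atTop := by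
  refine tendsto_integral_atTop_of_hasDerivAt_le hint
    ((tendsto_rpow_neg_nhdsGT_zero (by norm_num)).comp (tendsto_nhdsWithin_iff.2 ⟨hlim, hε⟩))
    (hderiv.and hε |>.mono fun t ht => ht.1.rpow_neg_half ht.2) ?_
  filter_upwards [hε, isLittleO_iff.1 hsmall one_pos] with t ht hle
  calc -(ε' t / (2 * ε t ^ ((3 : ℝ) / 2))) ≤ ‖ε' t / (2 * ε t ^ ((3 : ℝ) / 2))‖ := neg_le_abs _
    _ ≤ ε t := by simpa [abs_div, abs_of_pos ht] using hle

theorem tendsto_exp_neg_integral_mul_integral_of_isLittleO {ε h : ℝ → ℝ} {a : ℝ}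
    (hε : ContinuousOn ε (Ici a)) (hh : ContinuousOn h (Ici a)) (hε₀ : ∀ᶠ t in atTop, 0 ≤ ε t)
    (hE : Tendsto (fun t => ∫ s in a..t, ε s) atTop atTop) (hhε : h =o[atTop] ε) :
    Tendsto (fun t => Real.exp (-∫ s in a..t, ε s) *
      ∫ τ in a..t, Real.exp (∫ s in a..τ, ε s) * h τ) atTop (𝓝 0) := by
  set E := fun t => ∫ s in a..t, ε s
  have hexpE : ContinuousOn (fun t => Real.exp (E t)) (Ici a) :=
    hε.continuousOn_integral_of_Ici.rexp
  have hexpE_top : Tendsto (fun t => Real.exp (E t)) atTop atTop :=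
    Real.tendsto_exp_atTop.comp hE
  have hG : (fun t => ∫ τ in a..t, Real.exp (E τ) * ε τ) =ᶠ[atTop] fun t => Real.exp (E t) - 1 :=
    (eventually_ge_atTop a).mono fun t ht => integral_exp_integral_mul_eq hε ht
  have hlittle : (fun t => ∫ τ in a..t, Real.exp (E τ) * h τ) =o[atTop]
      fun t => Real.exp (E t) - 1 :=
    (((isBigO_refl _ _).mul_isLittleO hhε).intervalIntegral_atTop
      ((hexpE.mul hh).locallyIntegrableOn measurableSet_Ici)
      ((hexpE.mul hε).locallyIntegrableOn measurableSet_Ici)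
      (hε₀.mono fun t ht => mul_nonneg (Real.exp_pos _).le ht)
      ((tendsto_atTop_add_const_right _ (-1) hexpE_top).congr' (by
        filter_upwards [hG] with t ht; rw [ht, sub_eq_add_neg]))).congr' .rfl hG
  have hbig : (fun t => Real.exp (E t) - 1) =O[atTop] fun t => Real.exp (E t) :=
    (isBigO_refl _ _).sub
      (isLittleO_const_left.2 (Or.inr (tendsto_norm_atTop_atTop.comp hexpE_top))).isBigO
  refine (hlittle.trans_isBigO hbig).tendsto_div_nhds_zero.congr fun t => ?_
  rw [Real.exp_neg, div_eq_inv_mul]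

theorem stmt17_general (ε ε' : ℝ → ℝ)
    (hεC1 : ContDiffOn ℝ 1 ε (Ici 0))
    (hεd : ∀ t ∈ Ici (0 : ℝ), HasDerivWithinAt ε (ε' t) (Ici 0) t)
    (hεpos : ∀ t ∈ Ici (0 : ℝ), 0 < ε t)
    (hεlim : Tendsto ε atTop (nhds 0))
    (hεrate : Tendsto (fun t => |ε' t| / (ε t ^ ((5 : ℝ) / 2))) atTop (nhds 0)) :
    Tendsto (fun t => Real.exp (-∫ s in (0 : ℝ)..t, ε s) *
        ∫ τ in (0 : ℝ)..t,
          Real.exp (∫ s in (0 : ℝ)..τ, ε s) * (|ε' τ| / (2 * ε τ ^ ((3 : ℝ) / 2))))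
      atTop (nhds 0) := by
  have hεcont : ContinuousOn ε (Ici 0) := hεC1.continuousOn
  have hε'cont : ContinuousOn ε' (Ici 0) :=
    (hεC1.continuousOn_derivWithin (uniqueDiffOn_Ici 0) le_rfl).congr fun t ht =>
      ((hεd t ht).derivWithin (uniqueDiffOn_Ici 0 t ht)).symm
  have hweight : ContinuousOn (fun τ => |ε' τ| / (2 * ε τ ^ ((3 : ℝ) / 2))) (Ici 0) :=
    hε'cont.abs.div (continuousOn_const.mul (hεcont.rpow_const fun t ht => Or.inl (hεpos t ht).ne'))
      fun t ht => by have := hεpos t ht; positivity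
  have hεpos' : ∀ᶠ t in atTop, 0 < ε t := (eventually_ge_atTop 0).mono hεpos
  have hderiv : ∀ᶠ t in atTop, HasDerivAt ε (ε' t) t :=
    (eventually_gt_atTop 0).mono fun t ht => (hεd t ht.le).hasDerivAt (Ici_mem_nhds ht)
  have hsmall := isLittleO_abs_div_rpow_three_halves hεpos' hεrate
  exact tendsto_exp_neg_integral_mul_integral_of_isLittleO hεcont hweight
    (hεpos'.mono fun t ht => ht.le)
    (tendsto_integral_atTop_of_isLittleO (hεcont.locallyIntegrableOn measurableSet_Ici) hεpos'
      hεlim hderiv hsmall) hsmall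

/-- Under conditions (1.4) on `ε`,
`exp(−∫₀^t ε) ∫₀^t exp(∫₀^τ ε) |ε'(τ)|/(2 ε(τ)^{3/2}) dτ → 0` as `t → ∞`. -/
theorem stmt17 (ε ε' : ℝ → ℝ)
    (hεC1 : ContDiffOn ℝ 1 ε (Ici 0))
    (hεd : ∀ t ∈ Ici (0 : ℝ), HasDerivWithinAt ε (ε' t) (Ici 0) t)
    (hεpos : ∀ t ∈ Ici (0 : ℝ), 0 < ε t)
    (hεdec : AntitoneOn ε (Ici 0))
    (hεlim : Tendsto ε atTop (nhds 0))
    (hεrate : Tendsto (fun t => |ε' t| / (ε t ^ ((5 : ℝ) / 2))) atTop (nhds 0)) :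
    Tendsto (fun t => Real.exp (-∫ s in (0 : ℝ)..t, ε s) *
        ∫ τ in (0 : ℝ)..t,
          Real.exp (∫ s in (0 : ℝ)..τ, ε s) * (|ε' τ| / (2 * ε τ ^ ((3 : ℝ) / 2))))
      atTop (nhds 0) :=
  stmt17_general ε ε' hεC1 hεd hεpos hεlim hεrate
end

section
/- Let ε : ℝ → ℝ be continuous on [0,∞), positive, and nonincreasing on [0,∞), let c > 0, and let g : ℝ → ℝ be differentiable on [0,∞) with g(0) = 0 and g'(t) ≤ −ε(t)·g(t) + c for all t ≥ 0. Then g(t) ≤ c/ε(t) for all t ≥ 0. -/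
open Set

/-! Fix `t ≥ 0` and a level `K > c / ε t`. On `[0, t]` we have `ε ≥ ε t`, so wherever `g` touches
`K` its right derivative is at most `-ε t * K + c < 0`; hence `g`, which starts at `0 < K`, can never
cross `K`. Letting `K` decrease to `c / ε t` gives the bound. -/

theorem le_div_of_deriv_right_le_neg_mul_add {ε g g' : ℝ → ℝ} {a b c : ℝ}
    (hε : AntitoneOn ε (Icc a b)) (hεb : 0 < ε b) (hc : 0 ≤ c)
    (hg : ContinuousOn g (Icc a b)) (hg' : ∀ x ∈ Ico a b, HasDerivWithinAt g (g' x) (Ici x) x)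
    (hbound : ∀ x ∈ Ico a b, g' x ≤ -ε x * g x + c) (ha : g a ≤ c / ε b) :
    ∀ x ∈ Icc a b, g x ≤ c / ε b := by
  intro x hx
  refine le_of_forall_gt_imp_ge_of_dense fun K hK => ?_
  have hK₀ : 0 ≤ K := (div_nonneg hc hεb.le).trans hK.le
  have hcK : c < ε b * K := (div_lt_iff₀' hεb).1 hK
  refine image_le_of_deriv_right_lt_deriv_boundary (B := fun _ => K) (B' := 0) hg hg'
    (ha.trans hK.le) (fun _ => hasDerivAt_const _ _) (fun y hy hyK => ?_) hx
  have hεy : ε b ≤ ε y := hε ⟨hy.1, hy.2.le⟩ (right_mem_Icc.2 (hy.1.trans hy.2.le)) hy.2.le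
  calc g' y ≤ -ε y * K + c := hyK ▸ hbound y hy
    _ < 0 := by nlinarith [mul_le_mul_of_nonneg_right hεy hK₀]

theorem stmt18_general (ε : ℝ → ℝ)
    (hεpos : ∀ t ∈ Ici (0 : ℝ), 0 < ε t)
    (hεdec : AntitoneOn ε (Ici 0))
    (c : ℝ) (hc : 0 < c)
    (g g' : ℝ → ℝ)
    (hg : ∀ t ∈ Ici (0 : ℝ), HasDerivWithinAt g (g' t) (Ici 0) t)
    (hg0 : g 0 = 0)
    (hg' : ∀ t ∈ Ici (0 : ℝ), g' t ≤ -ε t * g t + c) :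
    ∀ t ∈ Ici (0 : ℝ), g t ≤ c / ε t := by
  intro t ht
  have hεt := hεpos t ht
  refine le_div_of_deriv_right_le_neg_mul_add (hεdec.mono Icc_subset_Ici_self) hεt hc.le
    (fun x hx => (hg x hx.1).continuousWithinAt.mono Icc_subset_Ici_self)
    (fun x hx => (hg x hx.1).mono (Ici_subset_Ici.2 hx.1)) (fun x hx => hg' x hx.1)
    (hg0.trans_le (div_nonneg hc.le hεt.le)) t ⟨ht, le_rfl⟩

/-- Appendix estimate: if `ε` is continuous, positive and nonincreasing on
`[0,∞)`, `c > 0`, `g` is differentiable on `[0,∞)` with `g(0) = 0` and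
`g'(t) ≤ −ε(t) g(t) + c` for `t ≥ 0`, then `g(t) ≤ c/ε(t)` for all `t ≥ 0`. -/
theorem stmt18 (ε : ℝ → ℝ)
    (hεcont : ContinuousOn ε (Ici 0))
    (hεpos : ∀ t ∈ Ici (0 : ℝ), 0 < ε t)
    (hεdec : AntitoneOn ε (Ici 0))
    (c : ℝ) (hc : 0 < c)
    (g g' : ℝ → ℝ)
    (hg : ∀ t ∈ Ici (0 : ℝ), HasDerivWithinAt g (g' t) (Ici 0) t)
    (hg0 : g 0 = 0)
    (hg' : ∀ t ∈ Ici (0 : ℝ), g' t ≤ -ε t * g t + c) :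
    ∀ t ∈ Ici (0 : ℝ), g t ≤ c / ε t :=
  stmt18_general ε hεpos hεdec c hc g g' hg hg0 hg'
end

section
/- Let H be a complex Hilbert space, A : H →L[ℂ] H a bounded linear operator, B := A†A, h ∈ H, y := B h, f := A y, and let δ > 0 and f_δ ∈ H with ‖f_δ − f‖ ≤ δ. Set ε := δ^{2/3}. Then ‖(B + ε•I)^{-1}(A† f_δ) − y‖ ≤ δ/(2√ε) + ε·‖h‖ = (1/2 + ‖h‖)·δ^{2/3}; in particular, for source elements y = B h the regularized solution converges at the rate O(δ^{2/3}). -/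
/-!
Write `T = A†A + ε`. Since `T⁻¹ A†A y = y - ε T⁻¹ y`, the error splits as
`T⁻¹ A†(f_δ - f) - ε T⁻¹ A†A h`. Both terms are bounded by pairing a normal equation
`A†A x + ε x = A† g` with `x`: this gives `‖A x‖² + ε ‖x‖² = re ⟪g, A x⟫ ≤ ‖g‖ ‖A x‖`, hence
`4 ε ‖x‖² ≤ ‖g‖²`. When `g = A h`, pairing `A†A (x - h) = -ε x` with `x - h` instead gives
`‖x‖² ≤ re ⟪x, h⟫`, hence `‖x‖ ≤ ‖h‖`. The choice `ε = δ^{2/3}` balances `δ / √ε` against `ε`.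
-/

open ContinuousLinearMap RCLike

section NormalEquation

variable {𝕜 E F : Type*} [RCLike 𝕜] [NormedAddCommGroup E] [InnerProductSpace 𝕜 E]

local notation "⟪" x ", " y "⟫" => inner 𝕜 x y

lemma re_inner_ofReal_smul_left (r : ℝ) (x y : E) : re ⟪(r : 𝕜) • x, y⟫ = r * re ⟪x, y⟫ := by
  rw [inner_smul_real_left, smul_re]

variable [CompleteSpace E] [NormedAddCommGroup F] [InnerProductSpace 𝕜 F] [CompleteSpace F]
  {A : E →L[𝕜] F} {ε : ℝ}

lemma norm_le_of_adjoint_apply_add_smul_eq_adjoint_apply (hε : 0 < ε) {x : E} {g : F}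
    (hx : adjoint A (A x) + (ε : 𝕜) • x = adjoint A g) : ‖x‖ ≤ ‖g‖ / (2 * √ε) := by
  have hre : ‖A x‖ ^ 2 + ε * ‖x‖ ^ 2 = re ⟪g, A x⟫ := by
    simpa only [inner_add_left, map_add, re_inner_ofReal_smul_left, inner_self_eq_norm_sq,
      adjoint_inner_left] using congrArg (fun v => re ⟪v, x⟫) hx
  have hsq : (2 * √ε * ‖x‖) ^ 2 ≤ ‖g‖ ^ 2 := by
    rw [mul_pow, mul_pow, Real.sq_sqrt hε.le]
    nlinarith [re_inner_le_norm (𝕜 := 𝕜) g (A x), sq_nonneg (2 * ‖A x‖ - ‖g‖)]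
  rw [le_div_iff₀ (by positivity), mul_comm]
  exact pow_le_pow_iff_left₀ (by positivity) (norm_nonneg g) two_ne_zero |>.mp hsq

lemma norm_le_of_adjoint_apply_add_smul_eq_adjoint_apply_self (hε : 0 < ε) {w h : E}
    (hw : adjoint A (A w) + (ε : 𝕜) • w = adjoint A (A h)) : ‖w‖ ≤ ‖h‖ := by
  have hdiff : adjoint A (A (w - h)) = -((ε : 𝕜) • w) := by
    rw [map_sub, map_sub, ← hw]; abel
  have hnonneg : 0 ≤ -(ε * re ⟪w, w - h⟫) := by
    rw [← re_inner_ofReal_smul_left, ← map_neg, ← inner_neg_left, ← hdiff,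
      adjoint_inner_left, inner_self_eq_norm_sq]
    positivity
  have hle : ‖w‖ ^ 2 ≤ ‖w‖ * ‖h‖ := by
    rw [inner_sub_right, map_sub, inner_self_eq_norm_sq] at hnonneg
    nlinarith [re_inner_le_norm (𝕜 := 𝕜) w h]
  nlinarith [norm_nonneg h]

end NormalEquation

section Tikhonov

variable {H : Type*} [NormedAddCommGroup H] [InnerProductSpace ℂ H] [CompleteSpace H]
  (A : H →L[ℂ] H) {ε : ℝ}

lemma isUnit_adjoint_mul_self_add_smul_one (hε : 0 < ε) :
    IsUnit (adjoint A * A + ε • (1 : H →L[ℂ] H)) := by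
  rw [← star_eq_adjoint]
  exact ((isStrictlyPositive_one.smul hε).nonneg_add (star_mul_self_nonneg A)).isUnit

lemma adjoint_apply_inverse_add_smul (hε : 0 < ε) (v : H) :
    adjoint A (A (Ring.inverse (adjoint A * A + ε • (1 : H →L[ℂ] H)) v)) +
      ε • Ring.inverse (adjoint A * A + ε • (1 : H →L[ℂ] H)) v = v := by
  simpa only [mul_apply_eq_comp, add_apply, smul_apply, one_apply_eq_self] using DFunLike.congr_fun
    (Ring.mul_inverse_cancel _ (isUnit_adjoint_mul_self_add_smul_one A hε)) v

lemma inverse_apply_adjoint_apply_self (hε : 0 < ε) (y : H) :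
    Ring.inverse (adjoint A * A + ε • (1 : H →L[ℂ] H)) (adjoint A (A y)) =
      y - ε • Ring.inverse (adjoint A * A + ε • (1 : H →L[ℂ] H)) y := by
  have := DFunLike.congr_fun
    (Ring.inverse_mul_cancel _ (isUnit_adjoint_mul_self_add_smul_one A hε)) y
  simp only [mul_apply_eq_comp, add_apply, smul_apply, one_apply_eq_self, map_add,
    map_smul_of_tower] at this
  rw [eq_sub_iff_add_eq, this]

lemma inverse_apply_adjoint_sub (hε : 0 < ε) (g y : H) :
    Ring.inverse (adjoint A * A + ε • (1 : H →L[ℂ] H)) (adjoint A g) - y =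
      Ring.inverse (adjoint A * A + ε • (1 : H →L[ℂ] H)) (adjoint A (g - A y)) -
        ε • Ring.inverse (adjoint A * A + ε • (1 : H →L[ℂ] H)) y := by
  rw [map_sub, map_sub, inverse_apply_adjoint_apply_self A hε]
  abel

theorem norm_inverse_adjoint_apply_sub_le (hε : 0 < ε) (h fδ : H) {δ : ℝ}
    (hfδ : ‖fδ - A (adjoint A (A h))‖ ≤ δ) :
    ‖Ring.inverse (adjoint A * A + ε • (1 : H →L[ℂ] H)) (adjoint A fδ) - adjoint A (A h)‖ ≤
      δ / (2 * √ε) + ε * ‖h‖ := by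
  rw [inverse_apply_adjoint_sub A hε]
  set R := Ring.inverse (adjoint A * A + ε • (1 : H →L[ℂ] H))
  have hnormal (v : H) : adjoint A (A (R v)) + (ε : ℂ) • R v = v := by
    rw [Complex.coe_smul]; exact adjoint_apply_inverse_add_smul A hε v
  have hdata : ‖R (adjoint A (fδ - A (adjoint A (A h))))‖ ≤ δ / (2 * √ε) :=
    (norm_le_of_adjoint_apply_add_smul_eq_adjoint_apply hε (hnormal _)).trans (by gcongr)
  have hsource : ‖R (adjoint A (A h))‖ ≤ ‖h‖ :=
    norm_le_of_adjoint_apply_add_smul_eq_adjoint_apply_self hε (hnormal _)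
  calc ‖R (adjoint A (fδ - A (adjoint A (A h)))) - ε • R (adjoint A (A h))‖
      ≤ ‖R (adjoint A (fδ - A (adjoint A (A h))))‖ + ε * ‖R (adjoint A (A h))‖ := by
        rw [← norm_smul_of_nonneg hε.le]
        exact norm_sub_le _ _
    _ ≤ δ / (2 * √ε) + ε * ‖h‖ := by gcongr

end Tikhonov

lemma div_two_mul_sqrt_rpow_two_div_three {δ : ℝ} (hδ : 0 < δ) :
    δ / (2 * √(δ ^ ((2 : ℝ) / 3))) = δ ^ ((2 : ℝ) / 3) / 2 := by
  have hsqrt : √(δ ^ ((2 : ℝ) / 3)) = δ ^ ((1 : ℝ) / 3) := by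
    rw [Real.sqrt_eq_rpow, ← Real.rpow_mul hδ.le]
    norm_num
  have hsplit : δ = δ ^ ((2 : ℝ) / 3) * δ ^ ((1 : ℝ) / 3) := by
    rw [← Real.rpow_add hδ]
    norm_num
  have hpos : 0 < δ ^ ((1 : ℝ) / 3) := by positivity
  rw [hsqrt]
  nth_rewrite 1 [hsplit]
  field_simp

/-- for source elements `y = B h` (with `B = A†A`), noisy data `f_δ` with
`‖f_δ − A y‖ ≤ δ`, and the a priori choice `ε = δ^{2/3}`, the Tikhonov approximation
satisfies `‖(B + εI)⁻¹ A† f_δ − y‖ ≤ δ/(2√ε) + ε‖h‖ = (1/2 + ‖h‖) δ^{2/3}`. -/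
theorem stmt19 {H : Type*} [NormedAddCommGroup H] [InnerProductSpace ℂ H] [CompleteSpace H]
    (A : H →L[ℂ] H) (B : H →L[ℂ] H) (hB : B = adjoint A * A)
    (h : H) (y : H) (hy : y = B h) (f : H) (hf : f = A y)
    (δ : ℝ) (hδ : 0 < δ) (fδ : H) (hfδ : ‖fδ - f‖ ≤ δ)
    (ε : ℝ) (hε : ε = δ ^ ((2 : ℝ) / 3)) :
    ‖Ring.inverse (B + ε • (1 : H →L[ℂ] H)) (adjoint A fδ) - y‖ ≤
        δ / (2 * Real.sqrt ε) + ε * ‖h‖ ∧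
      δ / (2 * Real.sqrt ε) + ε * ‖h‖ = (1 / 2 + ‖h‖) * δ ^ ((2 : ℝ) / 3) := by
  subst hB hy hf hε
  rw [mul_apply_eq_comp] at hfδ ⊢
  refine ⟨norm_inverse_adjoint_apply_sub_le A (by positivity) h fδ hfδ, ?_⟩
  rw [div_two_mul_sqrt_rpow_two_div_three hδ]
  ring
end
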